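/- Let n ≥ 6 and let w ∈ ℝ^{C(n,2)} (coordinates w_{ij} = w_{ji} for i ≠ j) satisfy the strict four-point condition: for all distinct i, j, k, l, the minimum of w_{ij}+w_{kl}, w_{ik}+w_{jl}, w_{il}+w_{jk} is attained exactly twice. Call a partition {A,B} of {1,…,n} with |A|, |B| ≥ 2 a split of w if for all distinct i, j ∈ A and distinct k, l ∈ B one has w_{ik}+w_{jl} = w_{il}+w_{jk} < w_{ij}+w_{kl}; say w is of caterpillar type if there is a permutation π of {1,…,n} such that for every i with 2 ≤ i ≤ n−2 the partition {π({1,…,i}), π({i+1,…,n})} is a split of w. Assume w is NOT of caterpillar type. Define w* ∈ ℝ^{C(n,n−2)} by w*_{C} = w_{ij} where C = {1,…,n}∖{i,j}, and let L_{w*} ⊆ ℝⁿ be the intersection, over all (n−1)-subsets J of {1,…,n}, of the sets T(F_J) = { x ∈ ℝⁿ : min_{j ∈ J}( w*_{J∖{j}} + x_j ) is attained at least twice }. Then L_{w*} is not an intersection of two tropical hyperplanes: there do not exist a, b ∈ (ℝ ∪ {∞})ⁿ, each with at least two finite coordinates, such that L_{w*} = T(a) ∩ T(b), where T(a) = { x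 ∈ ℝⁿ : min over i with aᵢ < ∞ of (aᵢ + xᵢ) is attained at least twice }. -/

import Mathlib

open scoped Classical

/-- The minimum of three reals is attained exactly twice. -/
def minExactlyTwice (a b c : ℝ) : Prop :=
  (a = b ∧ a < c) ∨ (a = c ∧ a < b) ∨ (b = c ∧ b < a)

/-- The strict four-point condition for a symmetric `w ∈ ℝ^{C(n,2)}`: for all pairwise
distinct `i, j, k, l`, the minimum of `w_{ij}+w_{kl}`, `w_{ik}+w_{jl}`, `w_{il}+w_{jk}` is
attained exactly twice. -/
def StrictFourPointSym (n : ℕ) (w : Fin n → Fin n → ℝ) : Prop :=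
  ∀ i j k l : Fin n, i ≠ j → i ≠ k → i ≠ l → j ≠ k → j ≠ l → k ≠ l →
    minExactlyTwice (w i j + w k l) (w i k + w j l) (w i l + w j k)

/-- The partition `{A, Aᶜ}` is a split of `w`: both blocks have at least two elements and
for all distinct `i, j ∈ A` and distinct `k, l ∈ Aᶜ` one has
`w_{ik} + w_{jl} = w_{il} + w_{jk} < w_{ij} + w_{kl}`. -/
def IsSplit (n : ℕ) (w : Fin n → Fin n → ℝ) (A : Finset (Fin n)) : Prop :=
  2 ≤ A.card ∧ 2 ≤ Aᶜ.card ∧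
    ∀ i ∈ A, ∀ j ∈ A, i ≠ j → ∀ k ∈ Aᶜ, ∀ l ∈ Aᶜ, k ≠ l →
      w i k + w j l = w i l + w j k ∧ w i k + w j l < w i j + w k l

/-- `w` is of caterpillar type: after relabeling by a permutation `π`, every partition
`{π{1,…,i}, π{i+1,…,n}}` with `2 ≤ i ≤ n−2` is a split of `w`. -/
def CaterpillarType (n : ℕ) (w : Fin n → Fin n → ℝ) : Prop :=
  ∃ π : Equiv.Perm (Fin n), ∀ i : ℕ, 2 ≤ i → i ≤ n - 2 →
    IsSplit n w ((Finset.univ.filter fun x : Fin n => (x : ℕ) < i).image π)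

/-- The dual tropical Plücker vector `w*`, defined on `(n−2)`-subsets `C` by
`w*_C = w_{ij}` where `{i,j}` is the complement of `C`. -/
noncomputable def wstar (n : ℕ) (w : Fin n → Fin n → ℝ) (C : Finset (Fin n)) : ℝ :=
  if h : Cᶜ.card = 2 then w (Cᶜ.orderIsoOfFin h 0) (Cᶜ.orderIsoOfFin h 1) else 0

/-- The tropical `(n−2)`-plane `L_{w*}`: the intersection over all `(n−1)`-subsets `J` of the
tropical hypersurfaces `T(F_J) = { x : min_{j∈J} (w*_{J∖{j}} + x_j) attained at least twice }`. -/
def Lplane (n : ℕ) (w : Fin n → Fin n → ℝ) : Set (Fin n → ℝ) :=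
  { x | ∀ J : Finset (Fin n), J.card = n - 1 →
      ∃ j ∈ J, ∃ j' ∈ J, j ≠ j' ∧
        wstar n w (J.erase j) + x j = wstar n w (J.erase j') + x j' ∧
        ∀ m ∈ J, wstar n w (J.erase j) + x j ≤ wstar n w (J.erase m) + x m }

/-- The tropical hyperplane `T(a)` of a tropical linear form with coefficients
`a ∈ (ℝ ∪ {∞})ⁿ`: the set of `x ∈ ℝⁿ` at which the minimum of `aᵢ + xᵢ` (over the finite
coefficients) is attained at least twice. -/
def tropHyperplane (n : ℕ) (a : Fin n → WithTop ℝ) : Set (Fin n → ℝ) :=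
  { x | ∃ i j : Fin n, i ≠ j ∧ a i + (x i : WithTop ℝ) ≠ ⊤ ∧
      a i + (x i : WithTop ℝ) = a j + (x j : WithTop ℝ) ∧
      ∀ l, a i + (x i : WithTop ℝ) ≤ a l + (x l : WithTop ℝ) }


section Aux

variable {n : ℕ}

lemma coe_untop0 (x : WithTop ℝ) (h : x ≠ ⊤) : ((x.untopD 0 : ℝ) : WithTop ℝ) = x := by
  lift x to ℝ using h
  rfl

lemma wstar_eq (w : Fin n → Fin n → ℝ) (C : Finset (Fin n)) (hc : (Cᶜ).card = 2) :
    wstar n w C = w (Cᶜ.orderIsoOfFin hc 0) (Cᶜ.orderIsoOfFin hc 1) := by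
  rw [wstar, dif_pos hc]

lemma compl_erase_erase {p q : Fin n} (hpq : p ≠ q) :
    (((Finset.univ.erase p).erase q)ᶜ : Finset (Fin n)) = {p, q} := by
  ext x
  simp only [Finset.mem_compl, Finset.mem_erase, Finset.mem_insert, Finset.mem_univ,
    Finset.mem_singleton, and_true]
  tauto

lemma wstar_pair (w : Fin n → Fin n → ℝ) (hsym : ∀ i j, w i j = w j i)
    {p q : Fin n} (hpq : p ≠ q) :
    wstar n w ((Finset.univ.erase p).erase q) = w p q := by
  have hc : ((((Finset.univ.erase p).erase q))ᶜ : Finset (Fin n)).card = 2 := by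
    rw [compl_erase_erase hpq, Finset.card_pair hpq]
  set C := (Finset.univ.erase p).erase q with hC
  rw [wstar_eq w C hc]
  have h0 : ((Cᶜ.orderIsoOfFin hc 0 : {x // x ∈ Cᶜ}) : Fin n) ∈ Cᶜ :=
    (Cᶜ.orderIsoOfFin hc 0).2
  have h1 : ((Cᶜ.orderIsoOfFin hc 1 : {x // x ∈ Cᶜ}) : Fin n) ∈ Cᶜ :=
    (Cᶜ.orderIsoOfFin hc 1).2
  have hne : ((Cᶜ.orderIsoOfFin hc 0 : {x // x ∈ Cᶜ}) : Fin n) ≠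
      ((Cᶜ.orderIsoOfFin hc 1 : {x // x ∈ Cᶜ}) : Fin n) := by
    intro h
    have h2 : (Cᶜ.orderIsoOfFin hc 0) = (Cᶜ.orderIsoOfFin hc 1) := Subtype.coe_injective h
    have h3 : (0 : Fin 2) = 1 := (Cᶜ.orderIsoOfFin hc).injective h2
    exact absurd h3 (by decide)
  have hmem : Cᶜ = {p, q} := compl_erase_erase hpq
  have key : ∀ y : Fin n, y ∈ Cᶜ → y = p ∨ y = q := by
    intro y hy
    rw [hmem] at hy
    simpa using hy
  rcases key _ h0 with h0' | h0' <;> rcases key _ h1 with h1' | h1' <;> rw [h0', h1']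
  · exact absurd (h0'.trans h1'.symm) hne
  · exact hsym q p
  · exact absurd (h0'.trans h1'.symm) hne

/-- Simplified membership condition for `Lplane`. -/
def LCond (w : Fin n → Fin n → ℝ) (x : Fin n → ℝ) : Prop :=
  ∀ p : Fin n, ∃ j j' : Fin n, j ≠ p ∧ j' ≠ p ∧ j ≠ j' ∧
    w p j + x j = w p j' + x j' ∧ ∀ m, m ≠ p → w p j + x j ≤ w p m + x m

lemma mem_L_iff (hn : 1 ≤ n) (w : Fin n → Fin n → ℝ) (hsym : ∀ i j, w i j = w j i)
    (x : Fin n → ℝ) : x ∈ Lplane n w ↔ LCond w x := by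
  constructor
  · intro h p
    have hJ : ((Finset.univ : Finset (Fin n)).erase p).card = n - 1 := by
      rw [Finset.card_erase_of_mem (Finset.mem_univ p), Finset.card_univ, Fintype.card_fin]
    obtain ⟨j, hjJ, j', hj'J, hjj', heq, hle⟩ := h _ hJ
    have hjp : j ≠ p := (Finset.mem_erase.mp hjJ).1
    have hj'p : j' ≠ p := (Finset.mem_erase.mp hj'J).1
    rw [wstar_pair w hsym hjp.symm, wstar_pair w hsym hj'p.symm] at heq
    refine ⟨j, j', hjp, hj'p, hjj', heq, fun m hm => ?_⟩
    have := hle m (Finset.mem_erase.mpr ⟨hm, Finset.mem_univ m⟩)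
    rwa [wstar_pair w hsym hjp.symm, wstar_pair w hsym hm.symm] at this
  · intro h J hJ
    have hcc : (Jᶜ : Finset (Fin n)).card = 1 := by
      rw [Finset.card_compl, hJ, Fintype.card_fin]
      omega
    obtain ⟨p, hp⟩ := Finset.card_eq_one.mp hcc
    have hJe : J = Finset.univ.erase p := by
      rw [← Finset.compl_singleton, ← hp, compl_compl]
    subst hJe
    obtain ⟨j, j', hjp, hj'p, hjj', heq, hle⟩ := h p
    refine ⟨j, Finset.mem_erase.mpr ⟨hjp, Finset.mem_univ j⟩,
      j', Finset.mem_erase.mpr ⟨hj'p, Finset.mem_univ j'⟩, hjj', ?_, ?_⟩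
    · rw [wstar_pair w hsym hjp.symm, wstar_pair w hsym hj'p.symm]; exact heq
    · intro m hm
      have hmp : m ≠ p := (Finset.mem_erase.mp hm).1
      rw [wstar_pair w hsym hjp.symm, wstar_pair w hsym hmp.symm]
      exact hle m hmp

end Aux

section Median

variable {n : ℕ}

private lemma min_rot (a b c : ℝ) : min c (min a b) = min a (min b c) := by
  rw [min_comm c (min a b), min_assoc]

/-- The point of `L` dual to the median of the three leaves `u`, `v`, `t`. -/
noncomputable def xmed (w : Fin n → Fin n → ℝ) (u v t : Fin n) : Fin n → ℝ := fun m =>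
  if m = u then (w u v + w u t + w v t) / 2 - w u v - w u t
  else if m = v then (w u v + w u t + w v t) / 2 - w u v - w v t
  else if m = t then (w u v + w u t + w v t) / 2 - w u t - w v t
  else (w u v + w u t + w v t) / 2 -
    min (w m u + w v t) (min (w m v + w u t) (w m t + w u v))

lemma core_min (w : Fin n → Fin n → ℝ) (hsym : ∀ i j, w i j = w j i)
    (h4 : StrictFourPointSym n w)
    {u v t : Fin n} (huv : u ≠ v) (hut : u ≠ t) (hvt : v ≠ t)
    (x : Fin n → ℝ) (K : ℝ)
    (hxu : x u = K - w u v - w u t) (hxv : x v = K - w u v - w v t)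
    (hxt : x t = K - w u t - w v t)
    (hxm : ∀ m, m ≠ u → m ≠ v → m ≠ t →
      x m = K - min (w m u + w v t) (min (w m v + w u t) (w m t + w u v)))
    {p : Fin n} (hpv : p ≠ v) (hpt : p ≠ t)
    (hp : p = u ∨ (p ≠ u ∧ w p v + w u t = w p t + w u v ∧ w p v + w u t < w p u + w v t)) :
    w p v + x v = w p t + x t ∧ ∀ m, m ≠ p → w p v + x v ≤ w p m + x m := by
  have heqvt : w p v + x v = w p t + x t := by
    rcases hp with rfl | ⟨hpu, heq, _⟩
    · rw [hxv, hxt]; ring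
    · rw [hxv, hxt]; linarith
  refine ⟨heqvt, fun m hmp => ?_⟩
  by_cases hmv : m = v
  · subst hmv; exact le_refl _
  by_cases hmt : m = t
  · subst hmt; exact le_of_eq heqvt
  by_cases hmu : m = u
  · subst hmu
    rcases hp with rfl | ⟨hpu, heq, hlt⟩
    · exact absurd rfl hmp
    · rw [hxv, hxu]; linarith
  -- m outside {u, v, t}
  have hxm' := hxm m hmu hmv hmt
  have hm1 : min (w m u + w v t) (min (w m v + w u t) (w m t + w u v)) ≤ w m u + w v t :=
    min_le_left _ _
  have hm2 : min (w m u + w v t) (min (w m v + w u t) (w m t + w u v)) ≤ w m v + w u t :=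
    le_trans (min_le_right _ _) (min_le_left _ _)
  rcases hp with rfl | ⟨hpu, heq, hlt⟩
  · -- p = u : trivial bound via hm1
    rw [hxv, hxm']
    linarith [hsym m p]
  · have hpm : p ≠ m := Ne.symm hmp
    rcases h4 m u v t hmu hmv hmt huv hut hvt with ⟨e1, l1⟩ | ⟨e1, l1⟩ | ⟨e1, l1⟩
    -- caseA : w m u + w v t = w m v + w u t < w m t + w u v   (m ~ t)
    · have star : w p v + w m u < w p u + w m v := by linarith
      rcases h4 p m u v hpm hpu hpv hmu hmv huv with ⟨f1, f2⟩ | ⟨f1, f2⟩ | ⟨f1, f2⟩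
      · linarith
      · rw [hxv, hxm']; linarith
      · linarith
    -- caseB : w m u + w v t = w m t + w u v < w m v + w u t   (m ~ v)
    · have star : w p v + w m u < w p u + w m v := by linarith
      rcases h4 p m u v hpm hpu hpv hmu hmv huv with ⟨f1, f2⟩ | ⟨f1, f2⟩ | ⟨f1, f2⟩
      · linarith
      · rw [hxv, hxm']; linarith
      · linarith
    -- caseC : w m v + w u t = w m t + w u v < w m u + w v t   (m ~ u)
    · rcases h4 p m v t hpm hpv hpt hmv hmt hvt with ⟨f1, f2⟩ | ⟨f1, f2⟩ | ⟨f1, f2⟩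
      · linarith
      · linarith
      · rw [hxv, hxm']; linarith

lemma median_memL (w : Fin n → Fin n → ℝ) (hsym : ∀ i j, w i j = w j i)
    (h4 : StrictFourPointSym n w)
    {u v t : Fin n} (huv : u ≠ v) (hut : u ≠ t) (hvt : v ≠ t) :
    LCond w (xmed w u v t) := by
  set K : ℝ := (w u v + w u t + w v t) / 2 with hK
  set x := xmed w u v t with hxdef
  have hxu : x u = K - w u v - w u t := by rw [hxdef]; simp [xmed, hK]
  have hxv : x v = K - w u v - w v t := by
    rw [hxdef]; simp [xmed, huv.symm, hK]
  have hxt : x t = K - w u t - w v t := by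
    rw [hxdef]; simp [xmed, hut.symm, hvt.symm, hK]
  have hxm : ∀ m, m ≠ u → m ≠ v → m ≠ t →
      x m = K - min (w m u + w v t) (min (w m v + w u t) (w m t + w u v)) := by
    intro m h1 h2 h3
    rw [hxdef]; simp [xmed, h1, h2, h3, hK]
  -- permuted versions, for core_min with (v, u, t)
  have hxu2 : x v = (w v u + w v t + w u t) / 2 - w v u - w v t := by
    rw [hxv, hK, hsym v u]; ring
  have hxv2 : x u = (w v u + w v t + w u t) / 2 - w v u - w u t := by
    rw [hxu, hK, hsym v u]; ring
  have hxt2 : x t = (w v u + w v t + w u t) / 2 - w v t - w u t := by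
    rw [hxt, hK, hsym v u]; ring
  have hxm2 : ∀ m, m ≠ v → m ≠ u → m ≠ t →
      x m = (w v u + w v t + w u t) / 2 -
        min (w m v + w u t) (min (w m u + w v t) (w m t + w v u)) := by
    intro m h1 h2 h3
    rw [hsym v u, min_left_comm]
    have := hxm m h2 h1 h3
    rw [hK] at this
    linarith [this]
  -- permuted versions, for core_min with (t, u, v)
  have hxu3 : x t = (w t u + w t v + w u v) / 2 - w t u - w t v := by
    rw [hxt, hK, hsym t u, hsym t v]; ring
  have hxv3 : x u = (w t u + w t v + w u v) / 2 - w t u - w u v := by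
    rw [hxu, hK, hsym t u, hsym t v]; ring
  have hxt3 : x v = (w t u + w t v + w u v) / 2 - w t v - w u v := by
    rw [hxv, hK, hsym t u, hsym t v]; ring
  have hxm3 : ∀ m, m ≠ t → m ≠ u → m ≠ v →
      x m = (w t u + w t v + w u v) / 2 -
        min (w m t + w u v) (min (w m u + w t v) (w m v + w t u)) := by
    intro m h1 h2 h3
    rw [hsym t u, hsym t v, min_rot]
    have := hxm m h2 h3 h1
    rw [hK] at this
    linarith [this]
  intro p
  by_cases hpu : p = u
  · have h1 : p ≠ v := by rw [hpu]; exact huv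
    have h2 : p ≠ t := by rw [hpu]; exact hut
    obtain ⟨he, hle⟩ := core_min w hsym h4 huv hut hvt x K hxu hxv hxt hxm h1 h2 (Or.inl hpu)
    exact ⟨v, t, Ne.symm h1, Ne.symm h2, hvt, he, fun m hm => hle m hm⟩
  by_cases hpv : p = v
  · have h1 : p ≠ u := hpu
    have h2 : p ≠ t := by rw [hpv]; exact hvt
    obtain ⟨he, hle⟩ := core_min w hsym h4 (Ne.symm huv) hvt hut x
      ((w v u + w v t + w u t) / 2) hxu2 hxv2 hxt2 hxm2 h1 h2 (Or.inl hpv)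
    exact ⟨u, t, Ne.symm h1, Ne.symm h2, hut, he, fun m hm => hle m hm⟩
  by_cases hpt : p = t
  · have h1 : p ≠ u := hpu
    have h2 : p ≠ v := hpv
    obtain ⟨he, hle⟩ := core_min w hsym h4 (Ne.symm hut) (Ne.symm hvt) huv x
      ((w t u + w t v + w u v) / 2) hxu3 hxv3 hxt3 hxm3 h1 h2 (Or.inl hpt)
    exact ⟨u, v, Ne.symm h1, Ne.symm h2, huv, he, fun m hm => hle m hm⟩
  rcases h4 p u v t hpu hpv hpt huv hut hvt with ⟨e, l⟩ | ⟨e, l⟩ | ⟨e, l⟩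
  · -- p ~ t
    obtain ⟨he, hle⟩ := core_min w hsym h4 (Ne.symm hut) (Ne.symm hvt) huv x
      ((w t u + w t v + w u v) / 2) hxu3 hxv3 hxt3 hxm3 hpu hpv
      (Or.inr ⟨hpt, by rw [hsym t v, hsym t u]; linarith, by rw [hsym t v]; linarith⟩)
    exact ⟨u, v, fun h => hpu h.symm, fun h => hpv h.symm, huv, he, fun m hm => hle m hm⟩
  · -- p ~ v
    obtain ⟨he, hle⟩ := core_min w hsym h4 (Ne.symm huv) hvt hut x
      ((w v u + w v t + w u t) / 2) hxu2 hxv2 hxt2 hxm2 hpu hpt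
      (Or.inr ⟨hpv, by rw [hsym v u]; linarith, l⟩)
    exact ⟨u, t, fun h => hpu h.symm, fun h => hpt h.symm, hut, he, fun m hm => hle m hm⟩
  · -- p ~ u
    obtain ⟨he, hle⟩ := core_min w hsym h4 huv hut hvt x K hxu hxv hxt hxm hpv hpt
      (Or.inr ⟨hpu, e, l⟩)
    exact ⟨v, t, fun h => hpv h.symm, fun h => hpt h.symm, hvt, he, fun m hm => hle m hm⟩

end Median

section Trop

variable {n : ℕ}

lemma mem_tropH {a : Fin n → WithTop ℝ} {x : Fin n → ℝ} {i j : Fin n}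
    (hij : i ≠ j) (hai : a i ≠ ⊤) (haj : a j ≠ ⊤)
    (heq : (a i).untopD 0 + x i = (a j).untopD 0 + x j)
    (hle : ∀ l, a l ≠ ⊤ → (a i).untopD 0 + x i ≤ (a l).untopD 0 + x l) :
    x ∈ tropHyperplane n a := by
  refine ⟨i, j, hij, ?_, ?_, ?_⟩
  · rw [← coe_untop0 _ hai, ← WithTop.coe_add]
    exact WithTop.coe_ne_top
  · rw [← coe_untop0 _ hai, ← coe_untop0 _ haj, ← WithTop.coe_add, ← WithTop.coe_add]
    exact_mod_cast heq
  · intro l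
    by_cases hal : a l = ⊤
    · rw [hal]
      simp
    · rw [← coe_untop0 _ hai, ← coe_untop0 _ hal, ← WithTop.coe_add, ← WithTop.coe_add,
        WithTop.coe_le_coe]
      exact hle l hal

lemma tropH_elim {a : Fin n → WithTop ℝ} {x : Fin n → ℝ}
    (h : x ∈ tropHyperplane n a) :
    ∃ i j : Fin n, i ≠ j ∧ a i ≠ ⊤ ∧ a j ≠ ⊤ ∧
      (a i).untopD 0 + x i = (a j).untopD 0 + x j ∧
      ∀ l, a l ≠ ⊤ → (a i).untopD 0 + x i ≤ (a l).untopD 0 + x l := by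
  obtain ⟨i, j, hij, hne, heq, hle⟩ := h
  have hai : a i ≠ ⊤ := by
    intro hh
    rw [hh] at hne
    simp at hne
  have haj : a j ≠ ⊤ := by
    intro hh
    rw [hh] at heq
    exact hne (heq.trans (by simp))
  refine ⟨i, j, hij, hai, haj, ?_, ?_⟩
  · rw [← coe_untop0 _ hai, ← coe_untop0 _ haj, ← WithTop.coe_add, ← WithTop.coe_add] at heq
    exact_mod_cast heq
  · intro l hal
    have := hle l
    rw [← coe_untop0 _ hai, ← coe_untop0 _ hal, ← WithTop.coe_add, ← WithTop.coe_add,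
      WithTop.coe_le_coe] at this
    exact this

/-- changing `x` on coordinates where `a` is `⊤` keeps it in the hyperplane. -/
lemma tropH_congr {a : Fin n → WithTop ℝ} {x y : Fin n → ℝ}
    (h : x ∈ tropHyperplane n a) (hxy : ∀ l, a l ≠ ⊤ → y l = x l) :
    y ∈ tropHyperplane n a := by
  obtain ⟨i, j, hij, hai, haj, heq, hle⟩ := tropH_elim h
  refine mem_tropH hij hai haj ?_ ?_
  · rw [hxy i hai, hxy j haj]; exact heq
  · intro l hal
    rw [hxy i hai, hxy l hal]
    exact hle l hal

lemma not_LCond_of_unique {w : Fin n → Fin n → ℝ} {x : Fin n → ℝ} {p j0 : Fin n}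
    (hj0 : j0 ≠ p) (h : ∀ m, m ≠ p → m ≠ j0 → w p j0 + x j0 < w p m + x m) :
    ¬ LCond w x := by
  intro hL
  obtain ⟨j, j', hjp, hj'p, hjj', heq, hle⟩ := hL p
  have hj : j = j0 := by
    by_contra hne
    have h1 := hle j0 hj0
    have h2 := h j hjp hne
    linarith
  have hj' : j' = j0 := by
    by_contra hne
    have h1 := hle j0 hj0
    have h2 := h j' hj'p hne
    linarith [heq]
  exact hjj' (hj.trans hj'.symm)

end Trop

section Rays

variable {n : ℕ}

lemma not_both_top (hn : 6 ≤ n) (w : Fin n → Fin n → ℝ) (hsym : ∀ i j, w i j = w j i)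
    (h4 : StrictFourPointSym n w) {a b : Fin n → WithTop ℝ}
    (hEq : Lplane n w = tropHyperplane n a ∩ tropHyperplane n b) (i : Fin n) :
    a i ≠ ⊤ ∨ b i ≠ ⊤ := by
  by_contra hcon
  push_neg at hcon
  obtain ⟨hai, hbi⟩ := hcon
  have h0 : (0 : ℕ) < n := by omega
  have h1 : (1 : ℕ) < n := by omega
  have h2 : (2 : ℕ) < n := by omega
  set u : Fin n := ⟨0, h0⟩ with hu
  set v : Fin n := ⟨1, h1⟩ with hv
  set t : Fin n := ⟨2, h2⟩ with ht
  have huv : u ≠ v := by simp [hu, hv, Fin.ext_iff]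
  have hut : u ≠ t := by simp [hu, ht, Fin.ext_iff]
  have hvt : v ≠ t := by simp [hv, ht, Fin.ext_iff]
  set x0 := xmed w u v t with hx0def
  have hx0 : x0 ∈ Lplane n w :=
    (mem_L_iff (by omega) w hsym _).mpr (median_memL w hsym h4 huv hut hvt)
  have hmem : x0 ∈ tropHyperplane n a ∩ tropHyperplane n b := by
    rw [← hEq]; exact hx0
  set p : Fin n := if i = u then v else u with hp
  have hpi : p ≠ i := by
    rw [hp]
    split
    · rename_i hh
      rw [hh]
      exact Ne.symm huv
    · rename_i hh
      exact fun hc => hh hc.symm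
  have hneU : (Finset.univ : Finset (Fin n)).Nonempty := ⟨u, Finset.mem_univ u⟩
  set s : ℝ := 1 + Finset.univ.sup' hneU (fun m => w p i + x0 i - w p m - x0 m) with hs
  set y : Fin n → ℝ := fun m => if m = i then x0 i - s else x0 m with hy
  have hyeq : ∀ l : Fin n, l ≠ i → y l = x0 l := by
    intro l hl
    simp [hy, hl]
  have hya : y ∈ tropHyperplane n a :=
    tropH_congr hmem.1 (fun l hal => hyeq l (fun h => hal (h ▸ hai)))
  have hyb : y ∈ tropHyperplane n b :=
    tropH_congr hmem.2 (fun l hbl => hyeq l (fun h => hbl (h ▸ hbi)))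
  have hyL : LCond w y := (mem_L_iff (by omega) w hsym y).mp (by rw [hEq]; exact ⟨hya, hyb⟩)
  refine not_LCond_of_unique (Ne.symm hpi) ?_ hyL
  intro m hmp hmi
  have hb1 := Finset.le_sup' (fun m => w p i + x0 i - w p m - x0 m) (Finset.mem_univ m)
  have hyi : y i = x0 i - s := by simp [hy]
  rw [hyi, hyeq m hmi]
  rw [hs] at *
  linarith

lemma b_top_unique (hn : 6 ≤ n) (w : Fin n → Fin n → ℝ) (hsym : ∀ i j, w i j = w j i)
    {a b : Fin n → WithTop ℝ}
    (hEq : Lplane n w = tropHyperplane n a ∩ tropHyperplane n b)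
    (hb2 : ∃ r s : Fin n, r ≠ s ∧ b r ≠ ⊤ ∧ b s ≠ ⊤)
    {i j : Fin n} (hij : i ≠ j) (hai : a i ≠ ⊤) (haj : a j ≠ ⊤)
    (hbi : b i = ⊤) (hbj : b j = ⊤) : False := by
  obtain ⟨r, s, hrs, hbr, hbs⟩ := hb2
  have hri : r ≠ i := fun h => hbr (h ▸ hbi)
  have hrj : r ≠ j := fun h => hbr (h ▸ hbj)
  have hsi : s ≠ i := fun h => hbs (h ▸ hbi)
  have hsj : s ≠ j := fun h => hbs (h ▸ hbj)
  have hneU : (Finset.univ : Finset (Fin n)).Nonempty := ⟨i, Finset.mem_univ i⟩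
  set A : Fin n → ℝ := fun m => (a m).untopD 0 with hA
  set B : Fin n → ℝ := fun m => (b m).untopD 0 with hB
  set z : Fin n → ℝ := fun m => if b m = ⊤ then 0 else - B m with hz
  set R : ℝ := 1 + Finset.univ.sup' hneU
    (fun m => max (-(A m + z m)) (w i j - A j - w i m - z m)) with hR
  set x : Fin n → ℝ := fun m => if m = i then - A i - R else if m = j then - A j - R else z m
    with hx
  have hxi : x i = - A i - R := by simp [hx]
  have hxj : x j = - A j - R := by simp [hx, hij.symm, Ne.symm hij]
  have hxm : ∀ m, m ≠ i → m ≠ j → x m = z m := by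
    intro m h1 h2
    simp [hx, h1, h2]
  have hzz : ∀ m, b m ≠ ⊤ → z m = - B m := by
    intro m hm
    simp [hz, hm]
  have hTa : x ∈ tropHyperplane n a := by
    refine mem_tropH hij hai haj ?_ ?_
    · rw [hxi, hxj]; ring
    · intro l hal
      rcases eq_or_ne l i with rfl | hli
      · exact le_of_eq rfl
      rcases eq_or_ne l j with rfl | hlj
      · rw [hxi, hxj]; simp only [hA]; linarith
      rw [hxi, hxm l hli hlj]
      have h1 := Finset.le_sup'
        (fun m => max (-(A m + z m)) (w i j - A j - w i m - z m)) (Finset.mem_univ l)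
      have h2 : -(A l + z l) ≤ _ := le_trans (le_max_left _ _) h1
      rw [hR] at *
      linarith
  have hTb : x ∈ tropHyperplane n b := by
    refine mem_tropH hrs hbr hbs ?_ ?_
    · rw [hxm r hri hrj, hxm s hsi hsj, hzz r hbr, hzz s hbs]; ring
    · intro l hbl
      have hli : l ≠ i := fun h => hbl (h ▸ hbi)
      have hlj : l ≠ j := fun h => hbl (h ▸ hbj)
      rw [hxm r hri hrj, hxm l hli hlj, hzz r hbr, hzz l hbl]
      simp only [hB]
      linarith
  have hxL : LCond w x := (mem_L_iff (by omega) w hsym x).mp (by rw [hEq]; exact ⟨hTa, hTb⟩)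
  refine not_LCond_of_unique (Ne.symm hij) ?_ hxL
  intro m hmi hmj
  rw [hxj, hxm m hmi hmj]
  have h1 := Finset.le_sup'
    (fun m => max (-(A m + z m)) (w i j - A j - w i m - z m)) (Finset.mem_univ m)
  have h2 : w i j - A j - w i m - z m ≤ _ := le_trans (le_max_right _ _) h1
  rw [hR] at *
  linarith

lemma kappa_real_ne (hn : 6 ≤ n) (w : Fin n → Fin n → ℝ) (hsym : ∀ i j, w i j = w j i)
    {a b : Fin n → WithTop ℝ}
    (hEq : Lplane n w = tropHyperplane n a ∩ tropHyperplane n b)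
    {i j : Fin n} (hij : i ≠ j) (hai : a i ≠ ⊤) (haj : a j ≠ ⊤)
    (hbi : b i ≠ ⊤) (hbj : b j ≠ ⊤)
    (h : (a i).untopD 0 - (b i).untopD 0 = (a j).untopD 0 - (b j).untopD 0) : False := by
  have hneU : (Finset.univ : Finset (Fin n)).Nonempty := ⟨i, Finset.mem_univ i⟩
  set A : Fin n → ℝ := fun m => (a m).untopD 0 with hA
  set B : Fin n → ℝ := fun m => (b m).untopD 0 with hB
  set R : ℝ := 1 + Finset.univ.sup' hneU
    (fun m => max (- A m) (max (B i - A i - B m) (w i j - A j - w i m))) with hR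
  set x : Fin n → ℝ := fun m => if m = i then - A i - R else if m = j then - A j - R else 0
    with hx
  have hxi : x i = - A i - R := by simp [hx]
  have hxj : x j = - A j - R := by simp [hx, Ne.symm hij]
  have hxm : ∀ m, m ≠ i → m ≠ j → x m = 0 := by
    intro m h1 h2
    simp [hx, h1, h2]
  have hTa : x ∈ tropHyperplane n a := by
    refine mem_tropH hij hai haj ?_ ?_
    · rw [hxi, hxj]; ring
    · intro l hal
      rcases eq_or_ne l i with rfl | hli
      · exact le_of_eq rfl
      rcases eq_or_ne l j with rfl | hlj
      · rw [hxi, hxj]; simp only [hA]; linarith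
      rw [hxi, hxm l hli hlj]
      have h1 := Finset.le_sup'
        (fun m => max (- A m) (max (B i - A i - B m) (w i j - A j - w i m)))
        (Finset.mem_univ l)
      have h2 : - A l ≤ _ := le_trans (le_max_left _ _) h1
      rw [hR] at *
      linarith
  have hTb : x ∈ tropHyperplane n b := by
    refine mem_tropH hij hbi hbj ?_ ?_
    · rw [hxi, hxj]; simp only [hA, hB]; linarith
    · intro l hbl
      rcases eq_or_ne l i with rfl | hli
      · exact le_of_eq rfl
      rcases eq_or_ne l j with rfl | hlj
      · rw [hxi, hxj]; simp only [hA, hB]; linarith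
      rw [hxi, hxm l hli hlj]
      have h1 := Finset.le_sup'
        (fun m => max (- A m) (max (B i - A i - B m) (w i j - A j - w i m)))
        (Finset.mem_univ l)
      have h2 : B i - A i - B l ≤ _ :=
        le_trans (le_trans (le_max_left _ _) (le_max_right _ _)) h1
      rw [hR] at *
      linarith
  have hxL : LCond w x := (mem_L_iff (by omega) w hsym x).mp (by rw [hEq]; exact ⟨hTa, hTb⟩)
  refine not_LCond_of_unique (Ne.symm hij) ?_ hxL
  intro m hmi hmj
  rw [hxj, hxm m hmi hmj]
  have h1 := Finset.le_sup'
    (fun m => max (- A m) (max (B i - A i - B m) (w i j - A j - w i m)))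
    (Finset.mem_univ m)
  have h2 : w i j - A j - w i m ≤ _ :=
    le_trans (le_trans (le_max_right _ _) (le_max_right _ _)) h1
  rw [hR] at *
  linarith

end Rays

section Kappa

variable {n : ℕ}

/-- The key invariant: `κ i = a i - b i` with values in `EReal`. -/
noncomputable def kappa (a b : Fin n → WithTop ℝ) (i : Fin n) : EReal :=
  if a i = ⊤ then ⊤ else if b i = ⊤ then ⊥
  else (((a i).untopD 0 - (b i).untopD 0 : ℝ) : EReal)

lemma R1aux (hn : 6 ≤ n) (w : Fin n → Fin n → ℝ) (hsym : ∀ i j, w i j = w j i)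
    {a b : Fin n → WithTop ℝ}
    (hEq : Lplane n w = tropHyperplane n a ∩ tropHyperplane n b)
    {i j k l : Fin n} (hij : i ≠ j) (hik : i ≠ k) (hil : i ≠ l) (hjk : j ≠ k)
    (hjl : j ≠ l) (hkl : k ≠ l)
    (hai : a i ≠ ⊤) (haj : a j ≠ ⊤) (hbk : b k ≠ ⊤) (hbl : b l ≠ ⊤)
    (h1 : kappa a b i < kappa a b k) (h2 : kappa a b j < kappa a b k)
    (h3 : kappa a b i < kappa a b l) (h4' : kappa a b j < kappa a b l)
    (hlt : w k i - (a i).untopD 0 < w k j - (a j).untopD 0) : False := by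
  set A : Fin n → ℝ := fun m => (a m).untopD 0 with hA
  set B : Fin n → ℝ := fun m => (b m).untopD 0 with hB
  have hlohi : max (kappa a b i) (kappa a b j) < min (kappa a b k) (kappa a b l) :=
    max_lt (lt_min h1 h3) (lt_min h2 h4')
  obtain ⟨δ₁, hd1a, hd1b⟩ := EReal.exists_between_coe_real hlohi
  obtain ⟨δ₂, hd2a, hd2b⟩ := EReal.exists_between_coe_real hd1b
  have hδ : δ₁ < δ₂ := by exact_mod_cast hd2a
  have hneU : (Finset.univ : Finset (Fin n)).Nonempty := ⟨i, Finset.mem_univ i⟩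
  set M : ℝ := 1 + Finset.univ.sup' hneU
    (fun m => max (δ₂ - A m) (max (- B m) (w k i - A i + δ₂ - w k m))) with hM
  have key : ∀ δ : ℝ, max (kappa a b i) (kappa a b j) < (δ : EReal) →
      ((δ : EReal)) < min (kappa a b k) (kappa a b l) → δ ≤ δ₂ →
      w k i - A i + δ = w k l - B l := by
    intro δ hda hdb hd2
    set x : Fin n → ℝ := fun m => if m = i then δ - A i else if m = j then δ - A j
      else if m = k then - B k else if m = l then - B l else M with hx
    have hxi : x i = δ - A i := by simp [hx]
    have hxj : x j = δ - A j := by simp [hx, Ne.symm hij]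
    have hxk : x k = - B k := by simp [hx, Ne.symm hik, Ne.symm hjk]
    have hxl : x l = - B l := by simp [hx, Ne.symm hil, Ne.symm hjl, Ne.symm hkl]
    have hxm : ∀ m, m ≠ i → m ≠ j → m ≠ k → m ≠ l → x m = M := by
      intro m m1 m2 m3 m4
      simp [hx, m1, m2, m3, m4]
    have hsupb : ∀ m : Fin n,
        max (δ₂ - A m) (max (- B m) (w k i - A i + δ₂ - w k m)) ≤ M - 1 := by
      intro m
      have := Finset.le_sup'
        (fun m => max (δ₂ - A m) (max (- B m) (w k i - A i + δ₂ - w k m)))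
        (Finset.mem_univ m)
      rw [hM]
      linarith
    have hTa : x ∈ tropHyperplane n a := by
      refine mem_tropH hij hai haj ?_ ?_
      · rw [hxi, hxj]; simp only [hA]; ring
      · intro m ham
        rcases eq_or_ne m i with rfl | m1
        · exact le_of_eq rfl
        rcases eq_or_ne m j with rfl | m2
        · rw [hxi, hxj]; simp only [hA]; linarith
        rcases eq_or_ne m k with rfl | m3
        · -- need δ ≤ A k - B k
          have hκ : kappa a b m = (((A m - B m : ℝ)) : EReal) := by
            rw [kappa, if_neg ham, if_neg hbk]
          have : (δ : EReal) < ((A m - B m : ℝ) : EReal) :=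
            lt_of_lt_of_le hdb (le_trans (min_le_left _ _) (le_of_eq hκ))
          have hd : δ < A m - B m := by exact_mod_cast this
          rw [hxi, hxk]
          simp only [hA, hB] at *
          linarith
        rcases eq_or_ne m l with rfl | m4
        · have hκ : kappa a b m = (((A m - B m : ℝ)) : EReal) := by
            rw [kappa, if_neg ham, if_neg hbl]
          have : (δ : EReal) < ((A m - B m : ℝ) : EReal) :=
            lt_of_lt_of_le hdb (le_trans (min_le_right _ _) (le_of_eq hκ))
          have hd : δ < A m - B m := by exact_mod_cast this
          rw [hxi, hxl]
          simp only [hA, hB] at *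
          linarith
        · rw [hxi, hxm m m1 m2 m3 m4]
          have hb := le_trans (le_max_left _ _) (hsupb m)
          simp only [hA] at *
          linarith
    have hTb : x ∈ tropHyperplane n b := by
      refine mem_tropH hkl hbk hbl ?_ ?_
      · rw [hxk, hxl]; simp only [hB]; ring
      · intro m hbm
        rcases eq_or_ne m k with rfl | m3
        · exact le_of_eq rfl
        rcases eq_or_ne m l with rfl | m4
        · rw [hxk, hxl]; simp only [hB]; linarith
        rcases eq_or_ne m i with rfl | m1
        · have hκ : kappa a b m = (((A m - B m : ℝ)) : EReal) := by
            rw [kappa, if_neg hai, if_neg hbm]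
          have : ((A m - B m : ℝ) : EReal) < (δ : EReal) :=
            lt_of_le_of_lt (le_trans (le_of_eq hκ.symm) (le_max_left _ _)) hda
          have hd : A m - B m < δ := by exact_mod_cast this
          rw [hxk, hxi]
          simp only [hA, hB] at *
          linarith
        rcases eq_or_ne m j with rfl | m2
        · have hκ : kappa a b m = (((A m - B m : ℝ)) : EReal) := by
            rw [kappa, if_neg haj, if_neg hbm]
          have : ((A m - B m : ℝ) : EReal) < (δ : EReal) :=
            lt_of_le_of_lt (le_trans (le_of_eq hκ.symm) (le_max_right _ _)) hda
          have hd : A m - B m < δ := by exact_mod_cast this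
          rw [hxk, hxj]
          simp only [hA, hB] at *
          linarith
        · rw [hxk, hxm m m1 m2 m3 m4]
          have hb := le_trans (le_trans (le_max_left _ _) (le_max_right _ _)) (hsupb m)
          simp only [hB] at *
          linarith
    have hxL : LCond w x := (mem_L_iff (by omega) w hsym x).mp (by rw [hEq]; exact ⟨hTa, hTb⟩)
    obtain ⟨j0, j0', hj0k, hj0'k, hjj0, heq0, hle0⟩ := hxL k
    have hVi := hle0 i hik
    rw [hxi] at hVi
    have hmemj0 : ∀ m : Fin n, m ≠ k → w k j0 + x j0 ≤ w k m + x m → m = i ∨ m = l →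
        True := fun _ _ _ _ => trivial
    have hcase : ∀ m : Fin n, m ≠ k → (w k m + x m ≤ w k i + (δ - A i)) → m = i ∨ m = l := by
      intro m hmk hmle
      rcases eq_or_ne m i with rfl | m1
      · exact Or.inl rfl
      rcases eq_or_ne m l with rfl | m4
      · exact Or.inr rfl
      rcases eq_or_ne m j with rfl | m2
      · rw [hxj] at hmle
        simp only [hA] at *
        linarith
      · rw [hxm m m1 m2 hmk m4] at hmle
        have hb := le_trans (le_trans (le_max_right _ _) (le_max_right _ _)) (hsupb m)
        simp only [hA] at *
        linarith
    have hj0il : j0 = i ∨ j0 = l := hcase j0 hj0k (le_trans (le_of_eq rfl) hVi)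
    have hj0'il : j0' = i ∨ j0' = l := by
      refine hcase j0' hj0'k ?_
      rw [← heq0]
      exact hVi
    have hfin : w k i + (δ - A i) = w k l + x l := by
      rcases hj0il with rfl | rfl
      · rcases hj0'il with rfl | rfl
        · exact absurd rfl hjj0
        · rw [hxi] at heq0; exact heq0
      · rcases hj0'il with rfl | rfl
        · rw [hxi] at heq0; exact heq0.symm
        · exact absurd rfl hjj0
    rw [hxl] at hfin
    linarith
  have e1 := key δ₁ hd1a hd1b (le_of_lt hδ)
  have e2 := key δ₂ (lt_trans hd1a hd2a) hd2b (le_refl δ₂)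
  linarith

lemma R1 (hn : 6 ≤ n) (w : Fin n → Fin n → ℝ) (hsym : ∀ i j, w i j = w j i)
    {a b : Fin n → WithTop ℝ}
    (hEq : Lplane n w = tropHyperplane n a ∩ tropHyperplane n b)
    {i j k l : Fin n} (hij : i ≠ j) (hik : i ≠ k) (hil : i ≠ l) (hjk : j ≠ k)
    (hjl : j ≠ l) (hkl : k ≠ l)
    (hai : a i ≠ ⊤) (haj : a j ≠ ⊤) (hbk : b k ≠ ⊤) (hbl : b l ≠ ⊤)
    (h1 : kappa a b i < kappa a b k) (h2 : kappa a b j < kappa a b k)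
    (h3 : kappa a b i < kappa a b l) (h4' : kappa a b j < kappa a b l) :
    w k i - (a i).untopD 0 = w k j - (a j).untopD 0 := by
  by_contra hne
  rcases lt_or_gt_of_ne hne with h | h
  · exact R1aux hn w hsym hEq hij hik hil hjk hjl hkl hai haj hbk hbl h1 h2 h3 h4' h
  · exact R1aux hn w hsym hEq (Ne.symm hij) hjk hjl hik hil hkl haj hai hbk hbl
      h2 h1 h4' h3 h

lemma quartet (hn : 6 ≤ n) (w : Fin n → Fin n → ℝ) (hsym : ∀ i j, w i j = w j i)
    (h4 : StrictFourPointSym n w) {a b : Fin n → WithTop ℝ}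
    (hEq : Lplane n w = tropHyperplane n a ∩ tropHyperplane n b)
    {p q r s : Fin n} (hpq : p ≠ q) (hpr : p ≠ r) (hps : p ≠ s) (hqr : q ≠ r)
    (hqs : q ≠ s) (hrs : r ≠ s)
    (h1 : kappa a b p < kappa a b r) (h2 : kappa a b p < kappa a b s)
    (h3 : kappa a b q < kappa a b r) (h4'' : kappa a b q < kappa a b s) :
    w p r + w q s = w p s + w q r ∧ w p r + w q s < w p q + w r s := by
  have hap : a p ≠ ⊤ := by
    intro hh
    rw [kappa, if_pos hh] at h1
    exact absurd h1 not_top_lt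
  have haq : a q ≠ ⊤ := by
    intro hh
    rw [kappa, if_pos hh] at h3
    exact absurd h3 not_top_lt
  have hbr : b r ≠ ⊤ := by
    intro hh
    have har : a r ≠ ⊤ := (not_both_top hn w hsym h4 hEq r).resolve_right (not_not.mpr hh)
    simp only [kappa] at h1
    rw [if_neg har, if_pos hh] at h1
    exact absurd h1 not_lt_bot
  have hbs : b s ≠ ⊤ := by
    intro hh
    have has : a s ≠ ⊤ := (not_both_top hn w hsym h4 hEq s).resolve_right (not_not.mpr hh)
    simp only [kappa] at h2
    rw [if_neg has, if_pos hh] at h2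
    exact absurd h2 not_lt_bot
  have e1 := R1 hn w hsym hEq hpq hpr hps hqr hqs hrs hap haq hbr hbs h1 h3 h2 h4''
  have e2 := R1 hn w hsym hEq hpq hps hpr hqs hqr (Ne.symm hrs) hap haq hbs hbr h2 h4'' h1 h3
  have heqq : w p r + w q s = w p s + w q r := by
    linarith [e1, e2, hsym r p, hsym r q, hsym s p, hsym s q]
  refine ⟨heqq, ?_⟩
  rcases h4 p q r s hpq hpr hps hqr hqs hrs with ⟨f1, f2⟩ | ⟨f1, f2⟩ | ⟨f1, f2⟩ <;> linarith

end Kappa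

section Assembly

variable {n : ℕ}

lemma kappa_inj (hn : 6 ≤ n) (w : Fin n → Fin n → ℝ) (hsym : ∀ i j, w i j = w j i)
    (h4 : StrictFourPointSym n w) {a b : Fin n → WithTop ℝ}
    (hEq : Lplane n w = tropHyperplane n a ∩ tropHyperplane n b)
    (ha2 : ∃ r s : Fin n, r ≠ s ∧ a r ≠ ⊤ ∧ a s ≠ ⊤)
    (hb2 : ∃ r s : Fin n, r ≠ s ∧ b r ≠ ⊤ ∧ b s ≠ ⊤) :
    Function.Injective (kappa a b) := by
  intro i j hk
  by_contra hij
  have hi := not_both_top hn w hsym h4 hEq i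
  have hj := not_both_top hn w hsym h4 hEq j
  have hEq' : Lplane n w = tropHyperplane n b ∩ tropHyperplane n a := by
    rw [hEq, Set.inter_comm]
  by_cases hai : a i = ⊤
  · by_cases haj : a j = ⊤
    · exact b_top_unique hn w hsym hEq' ha2 hij (hi.resolve_left (not_not.mpr hai))
        (hj.resolve_left (not_not.mpr haj)) hai haj
    · simp only [kappa, if_pos hai, if_neg haj] at hk
      by_cases hbj : b j = ⊤
      · rw [if_pos hbj] at hk
        simp at hk
      · rw [if_neg hbj] at hk
        exact (EReal.coe_ne_top _) hk.symm
  · by_cases haj : a j = ⊤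
    · simp only [kappa, if_neg hai, if_pos haj] at hk
      by_cases hbi : b i = ⊤
      · rw [if_pos hbi] at hk
        simp at hk
      · rw [if_neg hbi] at hk
        exact (EReal.coe_ne_top _) hk
    · by_cases hbi : b i = ⊤
      · by_cases hbj : b j = ⊤
        · exact b_top_unique hn w hsym hEq hb2 hij hai haj hbi hbj
        · simp only [kappa, if_neg hai, if_neg haj, if_pos hbi, if_neg hbj] at hk
          exact (EReal.coe_ne_bot _) hk.symm
      · by_cases hbj : b j = ⊤
        · simp only [kappa, if_neg hai, if_neg haj, if_neg hbi, if_pos hbj] at hk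
          exact (EReal.coe_ne_bot _) hk
        · simp only [kappa, if_neg hai, if_neg haj, if_neg hbi, if_neg hbj] at hk
          have hkr : (a i).untopD 0 - (b i).untopD 0 = (a j).untopD 0 - (b j).untopD 0 := by
            exact_mod_cast hk
          exact kappa_real_ne hn w hsym hEq hij hai haj hbi hbj hkr

end Assembly

/-- if `w` satisfies the strict four-point condition and is not of caterpillar
type, then the dual tropical `(n−2)`-plane `L_{w*}` is not the intersection of two tropical
hyperplanes. -/
theorem Lplane_not_complete_intersection (n : ℕ) (hn : 6 ≤ n) (w : Fin n → Fin n → ℝ)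
    (hsym : ∀ i j, w i j = w j i) (h4 : StrictFourPointSym n w)
    (hcat : ¬ CaterpillarType n w) :
    ¬ ∃ a b : Fin n → WithTop ℝ,
        (∃ i j, i ≠ j ∧ a i ≠ ⊤ ∧ a j ≠ ⊤) ∧ (∃ i j, i ≠ j ∧ b i ≠ ⊤ ∧ b j ≠ ⊤) ∧
        Lplane n w = tropHyperplane n a ∩ tropHyperplane n b := by
  rintro ⟨a, b, ha2, hb2, hEq⟩
  apply hcat
  have hκinj : Function.Injective (kappa a b) := kappa_inj hn w hsym h4 hEq ha2 hb2
  set σ := Tuple.sort (kappa a b) with hσ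
  have hmono : StrictMono (kappa a b ∘ σ) :=
    (Tuple.monotone_sort (kappa a b)).strictMono_of_injective (hκinj.comp σ.injective)
  refine ⟨σ, ?_⟩
  intro i h2i hin2
  have hin : i < n := by omega
  have hfilt : (Finset.univ.filter fun x : Fin n => (x : ℕ) < i) = Finset.Iio ⟨i, hin⟩ := by
    ext x
    simp [Fin.lt_def]
  have hcard : (Finset.univ.filter fun x : Fin n => (x : ℕ) < i).card = i := by
    rw [hfilt]
    simp
  set A := (Finset.univ.filter fun x : Fin n => (x : ℕ) < i).image σ with hA
  have hcardA : A.card = i := by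
    rw [hA, Finset.card_image_of_injective _ σ.injective, hcard]
  have hmemA : ∀ y : Fin n, y ∈ A ↔ ((σ.symm y : Fin n) : ℕ) < i := by
    intro y
    rw [hA]
    constructor
    · intro hy
      obtain ⟨z, hz, rfl⟩ := Finset.mem_image.mp hy
      rw [Equiv.symm_apply_apply]
      exact (Finset.mem_filter.mp hz).2
    · intro hy
      exact Finset.mem_image.mpr ⟨σ.symm y,
        Finset.mem_filter.mpr ⟨Finset.mem_univ _, hy⟩, σ.apply_symm_apply y⟩
  refine ⟨?_, ?_, ?_⟩
  · rw [hcardA]; exact h2i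
  · rw [Finset.card_compl, hcardA, Fintype.card_fin]; omega
  · intro i' hi' j' hj' hij' k' hk' l' hl' hkl'
    have horder : ∀ y z : Fin n, y ∈ A → z ∈ Aᶜ → kappa a b y < kappa a b z := by
      intro y z hy hz
      have hy' := (hmemA y).mp hy
      have hz' : ¬ ((σ.symm z : Fin n) : ℕ) < i :=
        fun hc => (Finset.mem_compl.mp hz) ((hmemA z).mpr hc)
      have hlt : σ.symm y < σ.symm z := by
        rw [Fin.lt_def]; omega
      have hres := hmono hlt
      simpa [Function.comp, Equiv.apply_symm_apply] using hres
    have hne1 : i' ≠ k' := ne_of_mem_of_not_mem hi' (Finset.mem_compl.mp hk')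
    have hne2 : i' ≠ l' := ne_of_mem_of_not_mem hi' (Finset.mem_compl.mp hl')
    have hne3 : j' ≠ k' := ne_of_mem_of_not_mem hj' (Finset.mem_compl.mp hk')
    have hne4 : j' ≠ l' := ne_of_mem_of_not_mem hj' (Finset.mem_compl.mp hl')
    exact quartet hn w hsym h4 hEq hij' hne1 hne2 hne3 hne4 hkl'
      (horder i' k' hi' hk') (horder i' l' hi' hl') (horder j' k' hj' hk')
      (horder j' l' hj' hl')
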